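/- arXiv:2508.02991 — 6 statements merged into one kernel-verified Lean document; each statement's English description precedes it below -/
import Mathlib

section
/- Let Q be a quantale and f, g ∈ Q. Then F_f ∩ F_g = F_{f ⊔ g}, and {q ∈ Q : ∃ s ∈ F_f, ∃ t ∈ F_g, s * t ≤ q} = F_{f * g}. Concretely: {q : ∃ n ≥ 1, f^n ≤ q} ∩ {q : ∃ n ≥ 1, g^n ≤ q} = {q : ∃ n ≥ 1, (f ⊔ g)^n ≤ q}, and {q : ∃ n ≥ 1, ∃ m ≥ 1, f^n * g^m ≤ q} = {q : ∃ k ≥ 1, (f * g)^k ≤ q}. -/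
universe u v

/-- A (commutative, integral) quantale: a complete lattice with a commutative monoid
structure whose unit is the top element and whose multiplication distributes over
arbitrary suprema. -/
class IntegralQuantale (Q : Type u) extends CompleteLattice Q, CommMonoid Q where
  one_eq_top : (1 : Q) = ⊤
  mul_sSup : ∀ (a : Q) (S : Set Q), a * sSup S = ⨆ b ∈ S, a * b

section Aux

variable {Q : Type u} [IntegralQuantale Q]

lemma iq_mul_sup (a b c : Q) : a * (b ⊔ c) = a * b ⊔ a * c := by
  rw [← sSup_pair, IntegralQuantale.mul_sSup, iSup_pair]

lemma iq_mul_le_mul_left (a : Q) {b c : Q} (h : b ≤ c) : a * b ≤ a * c := by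
  have h2 : a * c = a * b ⊔ a * c := by rw [← iq_mul_sup, sup_eq_right.mpr h]
  rw [h2]; exact le_sup_left

lemma iq_mul_le_mul {a b c d : Q} (h1 : a ≤ b) (h2 : c ≤ d) : a * c ≤ b * d := by
  calc a * c ≤ a * d := iq_mul_le_mul_left a h2
  _ = d * a := mul_comm a d
  _ ≤ d * b := iq_mul_le_mul_left d h1
  _ = b * d := mul_comm d b

lemma iq_mul_le_left (a b : Q) : a * b ≤ a := by
  calc a * b ≤ a * ⊤ := iq_mul_le_mul_left a le_top
  _ = a * 1 := by rw [IntegralQuantale.one_eq_top]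
  _ = a := mul_one a

lemma iq_mul_le_right (a b : Q) : a * b ≤ b := by
  rw [mul_comm]; exact iq_mul_le_left b a

lemma iq_pow_le_pow {a b : Q} (h : a ≤ b) : ∀ n : ℕ, a ^ n ≤ b ^ n := by
  intro n
  induction n with
  | zero => simp
  | succ k ih => rw [pow_succ, pow_succ]; exact iq_mul_le_mul ih h

lemma iq_pow_le_pow_exp (a : Q) {n m : ℕ} (h : n ≤ m) : a ^ m ≤ a ^ n := by
  obtain ⟨k, rfl⟩ := Nat.exists_eq_add_of_le h
  rw [pow_add]
  exact iq_mul_le_left _ _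

lemma iq_sup_pow_le (a b : Q) : ∀ n m : ℕ, (a ⊔ b) ^ (n + m) ≤ a ^ n ⊔ b ^ m := by
  intro n
  induction n with
  | zero =>
    intro m
    simp only [Nat.zero_add, pow_zero, IntegralQuantale.one_eq_top]
    exact le_sup_of_le_left le_top
  | succ k ihk =>
    intro m
    induction m with
    | zero =>
      simp only [Nat.add_zero, pow_zero, IntegralQuantale.one_eq_top]
      exact le_sup_of_le_right le_top
    | succ j ihj =>
      have hX : (a ⊔ b) ^ (k + 1 + (j + 1)) = a * (a ⊔ b) ^ (k + (j + 1)) ⊔ b * (a ⊔ b) ^ (k + 1 + j) := by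
        rw [show k + 1 + (j + 1) = (k + (j + 1)) + 1 by ring, pow_succ, iq_mul_sup]
        congr 1
        · rw [mul_comm]
        · rw [mul_comm, show k + (j + 1) = k + 1 + j by ring]
      rw [hX]
      apply sup_le
      · calc a * (a ⊔ b) ^ (k + (j + 1)) ≤ a * (a ^ k ⊔ b ^ (j + 1)) :=
              iq_mul_le_mul_left a (ihk (j + 1))
        _ = a * a ^ k ⊔ a * b ^ (j + 1) := iq_mul_sup _ _ _
        _ ≤ a ^ (k + 1) ⊔ b ^ (j + 1) := by
              apply sup_le_sup
              · rw [pow_succ, mul_comm]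
              · exact iq_mul_le_right _ _
      · calc b * (a ⊔ b) ^ (k + 1 + j) ≤ b * (a ^ (k + 1) ⊔ b ^ j) :=
              iq_mul_le_mul_left b ihj
        _ = b * a ^ (k + 1) ⊔ b * b ^ j := iq_mul_sup _ _ _
        _ ≤ a ^ (k + 1) ⊔ b ^ (j + 1) := by
              apply sup_le_sup
              · exact iq_mul_le_right _ _
              · rw [pow_succ, mul_comm]

end Aux

/-- For `f, g` in a quantale, the intersection of the minimal m-filters at `f` and `g`
is the minimal m-filter at `f ⊔ g`, and the set-theoretic product of the minimal
m-filters at `f` and `g` is the minimal m-filter at `f * g`. -/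
theorem minFilter_inter_and_prod {Q : Type u} [IntegralQuantale Q] (f g : Q) :
    ({q : Q | ∃ n : ℕ, 1 ≤ n ∧ f ^ n ≤ q} ∩ {q : Q | ∃ n : ℕ, 1 ≤ n ∧ g ^ n ≤ q}
        = {q : Q | ∃ n : ℕ, 1 ≤ n ∧ (f ⊔ g) ^ n ≤ q}) ∧
    ({q : Q | ∃ n : ℕ, 1 ≤ n ∧ ∃ m : ℕ, 1 ≤ m ∧ f ^ n * g ^ m ≤ q}
        = {q : Q | ∃ k : ℕ, 1 ≤ k ∧ (f * g) ^ k ≤ q}) := by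
  constructor
  · ext q
    simp only [Set.mem_inter_iff, Set.mem_setOf_eq]
    constructor
    · rintro ⟨⟨n, hn, hfn⟩, ⟨m, hm, hgm⟩⟩
      refine ⟨n + m, by omega, ?_⟩
      exact le_trans (iq_sup_pow_le f g n m) (sup_le hfn hgm)
    · rintro ⟨n, hn, hle⟩
      exact ⟨⟨n, hn, le_trans (iq_pow_le_pow le_sup_left n) hle⟩,
        ⟨n, hn, le_trans (iq_pow_le_pow le_sup_right n) hle⟩⟩
  · ext q
    simp only [Set.mem_setOf_eq]
    constructor
    · rintro ⟨n, hn, m, hm, hle⟩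
      refine ⟨max n m, le_trans hn (le_max_left n m), ?_⟩
      calc (f * g) ^ max n m = f ^ max n m * g ^ max n m := mul_pow f g _
      _ ≤ f ^ n * g ^ m :=
          iq_mul_le_mul (iq_pow_le_pow_exp f (le_max_left n m))
            (iq_pow_le_pow_exp g (le_max_right n m))
      _ ≤ q := hle
    · rintro ⟨k, hk, hle⟩
      exact ⟨k, hk, k, hk, by rwa [← mul_pow]⟩
end

section
/- Let Q be a quantale, M a Q-module, and F a multiplicative filter of Q. The following are equivalent: (a) for every b ∈ M and every nonempty family (a_i)_{i ∈ I} in M with a_i ≼_F b for all i, one has ⨆_{i ∈ I} a_i ≼_F b; (b) for every b ∈ M there exists n_b ≥ 1 such that for all a ∈ M, a ≼_F b implies a ≼^{n_b}_F b. -/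
universe u v

/-- A module over a quantale. -/
class QModule (Q : Type u) [IntegralQuantale Q] (M : Type v) extends
    CompleteLattice M, SMul Q M where
  mul_smul' : ∀ (p q : Q) (m : M), (p * q) • m = p • (q • m)
  top_smul' : ∀ m : M, (⊤ : Q) • m = m
  smul_sSup' : ∀ (q : Q) (S : Set M), S.Nonempty → q • sSup S = ⨆ m ∈ S, q • m
  sSup_smul' : ∀ (S : Set Q) (m : M), S.Nonempty → (⨆ q ∈ S, (q : Q)) • m = ⨆ q ∈ S, q • m

/-- A multiplicative filter of a quantale. -/
def IsMFilter {Q : Type u} [IntegralQuantale Q] (F : Set Q) : Prop :=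
  ⊤ ∈ F ∧ (∀ a ∈ F, ∀ b : Q, a ≤ b → b ∈ F) ∧ ∀ a ∈ F, ∀ b ∈ F, a * b ∈ F

/-- `a ≼¹_F b`: `a` is locally less than `b` in one step; witnessed by a nonempty
family of pairs `(aᵢ, sᵢ)` with `sᵢ ∈ F`, `a ≤ ⨆ aᵢ` and `sᵢ • aᵢ ≤ b`. -/
def stepLE {Q : Type u} {M : Type v} [IntegralQuantale Q] [QModule Q M]
    (F : Set Q) (a b : M) : Prop :=
  ∃ P : Set (M × Q), P.Nonempty ∧ (∀ p ∈ P, p.2 ∈ F) ∧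
    (a ≤ ⨆ p ∈ P, Prod.fst p) ∧ ∀ p ∈ P, p.2 • p.1 ≤ b

/-- `a ≼ⁿ_F b`: locally less than in `n` steps. -/
def nStepLE {Q : Type u} {M : Type v} [IntegralQuantale Q] [QModule Q M]
    (F : Set Q) : ℕ → M → M → Prop
  | 0, a, b => a = b
  | n + 1, a, b => ∃ c : M, stepLE F a c ∧ nStepLE F n c b

/-- `a ≼_F b`: locally less than (in some positive number of steps). -/
def localLE {Q : Type u} {M : Type v} [IntegralQuantale Q] [QModule Q M]
    (F : Set Q) (a b : M) : Prop :=
  ∃ n : ℕ, 1 ≤ n ∧ nStepLE F n a b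

/-- A complete lattice is shrinkable if every inequality `x ≤ ⨆ xᵢ` can be shrunk
to an equality `x = ⨆ yⱼ` with each `yⱼ` below a finite subsupremum of the `xᵢ`. -/
def Shrinkable (L : Type u) [CompleteLattice L] : Prop :=
  ∀ (x : L) (S : Set L), S.Nonempty → x ≤ sSup S →
    ∃ Y : Set L, Y.Nonempty ∧ x = sSup Y ∧
      ∀ y ∈ Y, ∃ T : Finset L, T.Nonempty ∧ ↑T ⊆ S ∧ y ≤ T.sup id
section Aux

variable {Q : Type u} {M : Type v} [IntegralQuantale Q] [QModule Q M] {F : Set Q}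

lemma stepLE_refl (hF : IsMFilter F) (a : M) : stepLE F a a := by
  refine ⟨{((a : M), (⊤ : Q))}, ⟨_, rfl⟩, ?_, ?_, ?_⟩
  · rintro p hp
    simp only [Set.mem_singleton_iff] at hp
    subst hp; exact hF.1
  · simp
  · rintro p hp
    simp only [Set.mem_singleton_iff] at hp
    subst hp
    simp [QModule.top_smul']

lemma nStepLE_of_le {n : ℕ} (hn : 1 ≤ n) {a a' b : M} (h : a ≤ a')
    (h' : nStepLE F n a' b) : nStepLE F n a b := by
  match n, hn with
  | n + 1, _ =>
    obtain ⟨c, ⟨P, hPne, hPF, hle, hsm⟩, ht⟩ := h'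
    exact ⟨c, ⟨P, hPne, hPF, h.trans hle, hsm⟩, ht⟩

lemma nStepLE_sSup (n : ℕ) : ∀ (b : M) (S : Set M), S.Nonempty →
    (∀ a ∈ S, nStepLE F n a b) → nStepLE F n (sSup S) b := by
  induction n with
  | zero =>
    intro b S hS h
    obtain ⟨a, ha⟩ := hS
    exact le_antisymm (sSup_le fun x hx => (h x hx).le) ((h a ha) ▸ le_sSup ha)
  | succ n ih =>
    intro b S hS h
    choose c hc1 hc2 using h
    choose P hPne hPF hPle hPsm using hc1
    set C : Set M := {m | ∃ a, ∃ ha : a ∈ S, c a ha = m} with hC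
    refine ⟨sSup C, ?_, ih b C ?_ ?_⟩
    · refine ⟨{p | ∃ a, ∃ ha : a ∈ S, p ∈ P a ha}, ?_, ?_, ?_, ?_⟩
      · obtain ⟨a, ha⟩ := hS
        obtain ⟨p, hp⟩ := hPne a ha
        exact ⟨p, a, ha, hp⟩
      · rintro p ⟨a, ha, hp⟩
        exact hPF a ha p hp
      · refine sSup_le fun a ha => (hPle a ha).trans ?_
        exact iSup_le_iSup_of_subset (fun p hp => ⟨a, ha, hp⟩)
      · rintro p ⟨a, ha, hp⟩
        exact (hPsm a ha p hp).trans (le_sSup ⟨a, ha, rfl⟩)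
    · obtain ⟨a, ha⟩ := hS
      exact ⟨c a ha, a, ha, rfl⟩
    · rintro m ⟨a, ha, rfl⟩
      exact hc2 a ha

end Aux

/-- Equivalent characterizations of a localizable multiplicative filter:
(a) the local order is closed under nonempty suprema on the left;
(b) for every `b` there is a uniform bound `n_b` on the number of steps needed. -/
theorem localizable_iff_uniform_step_bound {Q : Type u} {M : Type v}
    [IntegralQuantale Q] [QModule Q M] (F : Set Q) (hF : IsMFilter F) :
    (∀ (b : M) (S : Set M), S.Nonempty → (∀ a ∈ S, localLE F a b) →
        localLE F (sSup S) b) ↔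
    (∀ b : M, ∃ n : ℕ, 1 ≤ n ∧ ∀ a : M, localLE F a b → nStepLE F n a b) := by
  constructor
  · intro h b
    have hb : localLE F b b := ⟨1, le_refl 1, b, stepLE_refl hF b, rfl⟩
    obtain ⟨n, hn1, hn⟩ := h b {a | localLE F a b} ⟨b, hb⟩ (fun a ha => ha)
    exact ⟨n, hn1, fun a ha => nStepLE_of_le hn1 (le_sSup (show a ∈ {a | localLE F a b} from ha)) hn⟩
  · intro h b S hS hall
    obtain ⟨n, hn1, hn⟩ := h b
    exact ⟨n, hn1, nStepLE_sSup n b S hS (fun a ha => hn a (hall a ha))⟩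
end

section
/- Let L be a complete lattice. For nonempty subsets S, T ⊆ L write S ⊑ T if every s ∈ S satisfies s ≤ ⨆ T₀ for some finite nonempty T₀ ⊆ T. Then L is shrinkable if and only if for all nonempty S, T ⊆ L there exists a nonempty W ⊆ L such that W ⊑ S, W ⊑ T, ⨆ W = (⨆ S) ⊓ (⨆ T), and every nonempty W' ⊆ L with W' ⊑ S and W' ⊑ T satisfies W' ⊑ W. -/
universe u

/-- For nonempty subsets `S, T` of a complete lattice, `S ⊑ T` means every element of `S`
is below the supremum of some finite nonempty subset of `T` (the suspension preorder). -/
def suspLE {L : Type u} [CompleteLattice L] (S T : Set L) : Prop :=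
  ∀ s ∈ S, ∃ T₀ : Finset L, T₀.Nonempty ∧ ↑T₀ ⊆ T ∧ s ≤ T₀.sup id

/-- A complete lattice is shrinkable iff any two nonempty subsets `S, T` admit a meet `W`
in the suspension preorder, whose supremum is the meet of the suprema. -/
theorem shrinkable_iff_suspension_meet (L : Type u) [CompleteLattice L] :
    Shrinkable L ↔
      ∀ S T : Set L, S.Nonempty → T.Nonempty →
        ∃ W : Set L, W.Nonempty ∧ suspLE W S ∧ suspLE W T ∧
          sSup W = sSup S ⊓ sSup T ∧
          ∀ W' : Set L, W'.Nonempty → suspLE W' S → suspLE W' T → suspLE W' W := by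
  constructor
  · intro h S T hS hT
    set W : Set L := {w | (∃ S₀ : Finset L, S₀.Nonempty ∧ ↑S₀ ⊆ S ∧ w ≤ S₀.sup id) ∧
        (∃ T₀ : Finset L, T₀.Nonempty ∧ ↑T₀ ⊆ T ∧ w ≤ T₀.sup id)} with hWdef
    refine ⟨W, ?_, ?_, ?_, ?_, ?_⟩
    · obtain ⟨s, hs⟩ := hS
      obtain ⟨t, ht⟩ := hT
      exact ⟨⊥, ⟨{s}, Finset.singleton_nonempty s, by simpa using hs, bot_le⟩,
        ⟨{t}, Finset.singleton_nonempty t, by simpa using ht, bot_le⟩⟩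
    · intro w hw; exact hw.1
    · intro w hw; exact hw.2
    · apply le_antisymm
      · apply sSup_le
        rintro w ⟨⟨S₀, _, hS₀, hwS⟩, ⟨T₀, _, hT₀, hwT⟩⟩
        refine le_inf (hwS.trans ?_) (hwT.trans ?_)
        · exact Finset.sup_le fun b hb => le_sSup (hS₀ hb)
        · exact Finset.sup_le fun b hb => le_sSup (hT₀ hb)
      · obtain ⟨Y, hYne, hxY, hY⟩ := h (sSup S ⊓ sSup T) S hS inf_le_left
        rw [hxY]
        apply sSup_le
        intro y hy
        have hyT : y ≤ sSup T := (le_sSup hy).trans (hxY ▸ inf_le_right)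
        obtain ⟨Z, hZne, hyZ, hZ⟩ := h y T hT hyT
        obtain ⟨S₀, hS₀ne, hS₀sub, hyS₀⟩ := hY y hy
        rw [hyZ]
        apply sSup_le
        intro z hz
        apply le_sSup
        obtain ⟨T₀, hT₀ne, hT₀sub, hzT₀⟩ := hZ z hz
        exact ⟨⟨S₀, hS₀ne, hS₀sub, ((le_sSup hz).trans hyZ.symm.le).trans hyS₀⟩,
          ⟨T₀, hT₀ne, hT₀sub, hzT₀⟩⟩
    · intro W' _ hWS hWT w' hw'
      refine ⟨{w'}, Finset.singleton_nonempty w', ?_, by simp⟩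
      simpa using ⟨hWS w' hw', hWT w' hw'⟩
  · intro h x S hS hx
    obtain ⟨W, hWne, hWS, _, hsup, _⟩ := h S {x} hS ⟨x, rfl⟩
    refine ⟨W, hWne, ?_, hWS⟩
    rw [hsup, sSup_singleton]
    exact (inf_eq_right.mpr hx).symm
end

section
/- Let Q be a quantale, M a shrinkable Q-module, and F, G multiplicative filters of Q. For a, b ∈ M and n, m ≥ 1, if a ≼ⁿ_F b and a ≼ᵐ_G b, then a ≼^{n+m-1}_{F ∩ G} b. -/
universe u v

/-!
With `smulBelow F y = {x | ∃ s ∈ F, s • x ≤ y}` and `stepBound F y = ⨆ smulBelow F y`, the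
relation `a ≼ⁿ_F b` (`n ≥ 1`) says `a ≤ (stepBound F)^[n] b`. Since `smulBelow F y` is a lower
set closed under binary joins, shrinkability refines `x ≤ stepBound F y ⊓ stepBound G z` to
`x ≤ ⨆ (smulBelow F y ∩ smulBelow G z)`. For `v` in this intersection, with witnesses `s ∈ F` and
`t ∈ G`, we have `(s ⊔ t) • v = s • v ⊔ t • v` and `s ⊔ t ∈ F ∩ G`; moreover `s • v` lies below
both `y` and `stepBound G z` (as `t • s • v ≤ t • v ≤ z`), and symmetrically for `t • v`. So the
merged bound for `(n, m)` reduces to those for `(n - 1, m)` and `(n, m - 1)`.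
-/

namespace IntegralQuantale

variable {Q : Type*} [IntegralQuantale Q]

theorem mul_sup (a b c : Q) : a * (b ⊔ c) = a * b ⊔ a * c := by
  rw [← sSup_pair, mul_sSup, iSup_pair]

theorem mul_le_left (s t : Q) : s * t ≤ s :=
  calc s * t ≤ s * t ⊔ s * 1 := le_sup_left
    _ = s := by rw [← mul_sup, one_eq_top, sup_top_eq, ← one_eq_top, mul_one]

theorem mul_le_right (s t : Q) : s * t ≤ t :=
  mul_comm s t ▸ mul_le_left t s

end IntegralQuantale

namespace IsMFilter

variable {Q : Type*} [IntegralQuantale Q] {F G : Set Q}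

theorem top_mem (hF : IsMFilter F) : ⊤ ∈ F := hF.1

theorem mem_of_le (hF : IsMFilter F) {a b : Q} (ha : a ∈ F) (hab : a ≤ b) : b ∈ F :=
  hF.2.1 a ha b hab

theorem mul_mem (hF : IsMFilter F) {a b : Q} (ha : a ∈ F) (hb : b ∈ F) : a * b ∈ F :=
  hF.2.2 a ha b hb

theorem inter (hF : IsMFilter F) (hG : IsMFilter G) : IsMFilter (F ∩ G) :=
  ⟨⟨hF.top_mem, hG.top_mem⟩,
    fun _ ha _ hab => ⟨hF.mem_of_le ha.1 hab, hG.mem_of_le ha.2 hab⟩,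
    fun _ ha _ hb => ⟨hF.mul_mem ha.1 hb.1, hG.mul_mem ha.2 hb.2⟩⟩

end IsMFilter

theorem Shrinkable.exists_subset_eq_sSup {L : Type*} [CompleteLattice L] (hL : Shrinkable L)
    {S : Set L} (hS : IsLowerSet S) (hSsup : SupClosed S) (hSne : S.Nonempty) {x : L}
    (hx : x ≤ sSup S) : ∃ Y ⊆ S, x = sSup Y := by
  obtain ⟨Y, -, rfl, hY⟩ := hL x S hSne hx
  refine ⟨Y, fun y hy => ?_, rfl⟩
  obtain ⟨T, hT, hTS, hyT⟩ := hY y hy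
  exact hS hyT (hSsup.finsetSup_mem hT fun z hz => hTS hz)

theorem Shrinkable.le_sSup_inter {L : Type*} [CompleteLattice L] (hL : Shrinkable L)
    {S T : Set L} (hS : IsLowerSet S) (hSsup : SupClosed S) (hSne : S.Nonempty)
    (hT : IsLowerSet T) (hTsup : SupClosed T) (hTne : T.Nonempty) {x : L}
    (hxS : x ≤ sSup S) (hxT : x ≤ sSup T) : x ≤ sSup (S ∩ T) := by
  obtain ⟨Y, hYS, rfl⟩ := hL.exists_subset_eq_sSup hS hSsup hSne hxS
  refine sSup_le fun y hy => ?_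
  obtain ⟨Z, hZT, rfl⟩ := hL.exists_subset_eq_sSup hT hTsup hTne ((le_sSup hy).trans hxT)
  exact sSup_le_sSup fun z hz => ⟨hS (le_sSup hz) (hYS hy), hZT hz⟩

namespace QModule

variable {Q : Type*} {M : Type*} [IntegralQuantale Q] [QModule Q M]

theorem smul_sup (q : Q) (m m' : M) : q • (m ⊔ m') = q • m ⊔ q • m' := by
  rw [← sSup_pair, smul_sSup' q _ (Set.insert_nonempty _ _), iSup_pair]

theorem sup_smul (p q : Q) (m : M) : (p ⊔ q) • m = p • m ⊔ q • m := by
  have h := sSup_smul' {p, q} m (Set.insert_nonempty _ _)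
  rwa [iSup_pair, iSup_pair] at h

theorem smul_mono_right (q : Q) {m m' : M} (h : m ≤ m') : q • m ≤ q • m' := by
  rw [← sup_eq_right.mpr h, smul_sup]
  exact le_sup_left

theorem smul_mono_left {p q : Q} (h : p ≤ q) (m : M) : p • m ≤ q • m := by
  rw [← sup_eq_right.mpr h, sup_smul]
  exact le_sup_left

end QModule

section StepBound

open QModule IntegralQuantale

variable {Q : Type*} {M : Type*} [IntegralQuantale Q] [QModule Q M] {F G : Set Q}

def smulBelow (F : Set Q) (y : M) : Set M := {x | ∃ s ∈ F, s • x ≤ y}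

def stepBound (F : Set Q) (y : M) : M := sSup (smulBelow F y)

theorem self_mem_smulBelow (hF : ⊤ ∈ F) (y : M) : y ∈ smulBelow F y :=
  ⟨⊤, hF, (top_smul' y).le⟩

theorem isLowerSet_smulBelow (F : Set Q) (y : M) : IsLowerSet (smulBelow F y) :=
  fun _ _ hxx' ⟨s, hs, hsx⟩ => ⟨s, hs, (smul_mono_right s hxx').trans hsx⟩

theorem supClosed_smulBelow (hF : IsMFilter F) (y : M) : SupClosed (smulBelow F y) := by
  rintro x ⟨s, hs, hsx⟩ x' ⟨t, ht, htx'⟩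
  refine ⟨s * t, hF.mul_mem hs ht, ?_⟩
  rw [smul_sup]
  exact sup_le ((smul_mono_left (mul_le_left s t) x).trans hsx)
    ((smul_mono_left (mul_le_right s t) x').trans htx')

theorem le_stepBound (hF : ⊤ ∈ F) (y : M) : y ≤ stepBound F y :=
  le_sSup (self_mem_smulBelow hF y)

theorem stepBound_mono (F : Set Q) {y y' : M} (h : y ≤ y') : stepBound F y ≤ stepBound F y' :=
  sSup_le_sSup fun _ ⟨s, hs, hsx⟩ => ⟨s, hs, hsx.trans h⟩

theorem le_iterate_stepBound (hF : ⊤ ∈ F) (n : ℕ) (y : M) : y ≤ (stepBound F)^[n] y := by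
  induction n with
  | zero => rfl
  | succ n ih =>
    rw [Function.iterate_succ_apply']
    exact ih.trans (le_stepBound hF _)

theorem stepLE_iff_le_stepBound (hF : ⊤ ∈ F) {a b : M} : stepLE F a b ↔ a ≤ stepBound F b := by
  constructor
  · rintro ⟨P, -, hPF, haP, hPb⟩
    exact haP.trans (iSup₂_le fun p hp => le_sSup ⟨p.2, hPF p hp, hPb p hp⟩)
  · intro h
    refine ⟨{p | p.2 ∈ F ∧ p.2 • p.1 ≤ b}, ⟨(b, ⊤), hF, (top_smul' b).le⟩,
      fun p hp => hp.1, h.trans (sSup_le ?_), fun p hp => hp.2⟩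
    rintro x ⟨s, hs, hsx⟩
    exact le_iSup₂_of_le (x, s) ⟨hs, hsx⟩ le_rfl

theorem nStepLE_succ_iff (hF : ⊤ ∈ F) {n : ℕ} {a b : M} :
    nStepLE F (n + 1) a b ↔ a ≤ (stepBound F)^[n + 1] b := by
  induction n generalizing a with
  | zero => simp [nStepLE, stepLE_iff_le_stepBound hF]
  | succ n ih =>
    rw [Function.iterate_succ_apply']
    refine ⟨fun ⟨c, hac, hcb⟩ => ?_, fun h => ⟨_, (stepLE_iff_le_stepBound hF).2 h, ih.2 le_rfl⟩⟩
    exact ((stepLE_iff_le_stepBound hF).1 hac).trans (stepBound_mono F (ih.1 hcb))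

theorem stepBound_inf_le_sSup_inter (hM : Shrinkable M) (hF : IsMFilter F) (hG : IsMFilter G)
    (y z : M) : stepBound F y ⊓ stepBound G z ≤ sSup (smulBelow F y ∩ smulBelow G z) :=
  hM.le_sSup_inter (isLowerSet_smulBelow F y) (supClosed_smulBelow hF y)
    ⟨y, self_mem_smulBelow hF.top_mem y⟩ (isLowerSet_smulBelow G z) (supClosed_smulBelow hG z)
    ⟨z, self_mem_smulBelow hG.top_mem z⟩ inf_le_left inf_le_right

theorem smul_le_stepBound {t : Q} (ht : t ∈ G) {v z : M} (htv : t • v ≤ z) (s : Q) :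
    s • v ≤ stepBound G z :=
  le_sSup ⟨t, ht, by rw [← mul_smul']; exact (smul_mono_left (mul_le_left t s) v).trans htv⟩

theorem stepBound_inf_le (hM : Shrinkable M) (hF : IsMFilter F) (hG : IsMFilter G) {y z w : M}
    (hy : y ⊓ stepBound G z ≤ w) (hz : stepBound F y ⊓ z ≤ w) :
    stepBound F y ⊓ stepBound G z ≤ stepBound (F ∩ G) w := by
  refine (stepBound_inf_le_sSup_inter hM hF hG y z).trans (sSup_le_sSup ?_)
  rintro v ⟨⟨s, hs, hsv⟩, ⟨t, ht, htv⟩⟩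
  refine ⟨s ⊔ t, ⟨hF.mem_of_le hs le_sup_left, hG.mem_of_le ht le_sup_right⟩, ?_⟩
  rw [sup_smul]
  exact sup_le (hy.trans' (le_inf hsv (smul_le_stepBound ht htv s)))
    (hz.trans' (le_inf (smul_le_stepBound hs hsv t) htv))

theorem iterate_stepBound_inf_le (hM : Shrinkable M) (hF : IsMFilter F) (hG : IsMFilter G)
    (n m : ℕ) (b : M) :
    (stepBound F)^[n + 1] b ⊓ (stepBound G)^[m + 1] b ≤ (stepBound (F ∩ G))^[n + m + 1] b := by
  rw [Function.iterate_succ_apply' (stepBound F), Function.iterate_succ_apply' (stepBound G),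
    Function.iterate_succ_apply' (stepBound (F ∩ G))]
  refine stepBound_inf_le hM hF hG ?_ ?_
  · cases n with
    | zero => exact inf_le_left.trans (le_iterate_stepBound (hF.inter hG).top_mem _ b)
    | succ n =>
      rw [← Function.iterate_succ_apply' (stepBound G), add_right_comm]
      exact iterate_stepBound_inf_le hM hF hG n m b
  · cases m with
    | zero => exact inf_le_right.trans (le_iterate_stepBound (hF.inter hG).top_mem _ b)
    | succ m =>
      rw [← Function.iterate_succ_apply' (stepBound F), ← add_assoc]
      exact iterate_stepBound_inf_le hM hF hG n m b
termination_by n + m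

end StepBound

/-- Filter merging: if `a ≼ⁿ_F b` and `a ≼ᵐ_G b` in a shrinkable module,
then `a ≼^{n+m-1}_{F ∩ G} b`. -/
theorem filter_merge {Q : Type u} {M : Type v} [IntegralQuantale Q] [QModule Q M]
    (hM : Shrinkable M) (F G : Set Q) (hF : IsMFilter F) (hG : IsMFilter G)
    (a b : M) (n m : ℕ) (hn : 1 ≤ n) (hm : 1 ≤ m)
    (hFn : nStepLE F n a b) (hGm : nStepLE G m a b) :
    nStepLE (F ∩ G) (n + m - 1) a b := by
  obtain ⟨n, rfl⟩ := Nat.exists_eq_add_of_le' hn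
  obtain ⟨m, rfl⟩ := Nat.exists_eq_add_of_le' hm
  rw [nStepLE_succ_iff hF.top_mem] at hFn
  rw [nStepLE_succ_iff hG.top_mem] at hGm
  rw [show n + 1 + (m + 1) - 1 = n + m + 1 by omega, nStepLE_succ_iff (hF.inter hG).top_mem]
  exact (le_inf hFn hGm).trans (iterate_stepBound_inf_le hM hF hG n m b)
end

section
/- Let Q be a quantale and M a continuous Q-module. Let (F_i)_{i ∈ I} be a nonempty family of multiplicative filters of Q, each 1-step over M, and set F = ⋂_{i ∈ I} F_i. Then F is 1-step over M: for all a, b ∈ M, a ≼_F b implies a ≼¹_F b. -/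
universe u v

/-- A complete lattice is continuous if every element `x` admits a nonempty set `B`
with `⨆ B = x` such that whenever `x ≤ ⨆ T` for nonempty `T`, every `b ∈ B` is below
the supremum of a finite nonempty subset of `T`. -/
def ContinuousLattice (L : Type v) [CompleteLattice L] : Prop :=
  ∀ x : L, ∃ B : Set L, B.Nonempty ∧ sSup B = x ∧
    ∀ T : Set L, T.Nonempty → x ≤ sSup T → ∀ b ∈ B,
      ∃ T₀ : Finset L, T₀.Nonempty ∧ ↑T₀ ⊆ T ∧ b ≤ T₀.sup id

/-- An m-filter `F` is 1-step over `M` if `a ≼_F b` implies `a ≼¹_F b`. -/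
def OneStep {Q : Type u} (M : Type v) [IntegralQuantale Q] [QModule Q M]
    (F : Set Q) : Prop :=
  ∀ a b : M, localLE F a b → stepLE F a b

section Aux

variable {Q : Type u} {M : Type v} [IntegralQuantale Q] [QModule Q M]

lemma iq_mul_le_left_s9 (q r : Q) : q * r ≤ q := by
  have h3 : q * ⊤ = q := by rw [← IntegralQuantale.one_eq_top, mul_one]
  have h1 := IntegralQuantale.mul_sSup q ({r, ⊤} : Set Q)
  simp only [sSup_insert, sSup_singleton, iSup_insert, iSup_singleton, sup_top_eq, h3] at h1
  exact le_sup_left.trans h1.ge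

lemma qsmul_le_smul_right {q r : Q} (h : q ≤ r) (m : M) : q • m ≤ r • m := by
  have h1 := QModule.sSup_smul' ({q, r} : Set Q) m ⟨q, by simp⟩
  simp only [iSup_insert, iSup_singleton] at h1
  rw [sup_eq_right.mpr h] at h1
  exact le_sup_left.trans h1.ge

lemma qsmul_le_smul_left (q : Q) {m n : M} (h : m ≤ n) : q • m ≤ q • n := by
  have h1 := QModule.smul_sSup' q ({m, n} : Set M) ⟨m, by simp⟩
  simp only [sSup_insert, sSup_singleton, iSup_insert, iSup_singleton] at h1
  rw [sup_eq_right.mpr h] at h1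
  exact le_sup_left.trans h1.ge

lemma mfilter_prod {F : Set Q} (hF : IsMFilter F) {α : Type*} (T : Finset α) (f : α → Q)
    (h : ∀ x ∈ T, f x ∈ F) : (∏ x ∈ T, f x) ∈ F := by
  classical
  refine Finset.prod_induction f (· ∈ F) (fun a b ha hb => hF.2.2 a ha b hb) ?_ h
  rw [IntegralQuantale.one_eq_top]; exact hF.1

lemma stepLE_mono {F G : Set Q} (h : F ⊆ G) {a b : M} (hab : stepLE F a b) :
    stepLE G a b := by
  obtain ⟨P, hPne, hPF, haP, hPb⟩ := hab
  exact ⟨P, hPne, fun p hp => h (hPF p hp), haP, hPb⟩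

lemma nStepLE_mono {F G : Set Q} (h : F ⊆ G) {n : ℕ} {a b : M}
    (hab : nStepLE F n a b) : nStepLE G n a b := by
  induction n generalizing a with
  | zero => exact hab
  | succ n ih =>
    obtain ⟨c, hc1, hc2⟩ := hab
    exact ⟨c, stepLE_mono h hc1, ih hc2⟩

lemma localLE_mono {F G : Set Q} (h : F ⊆ G) {a b : M} (hab : localLE F a b) :
    localLE G a b := by
  obtain ⟨n, hn, hab⟩ := hab
  exact ⟨n, hn, nStepLE_mono h hab⟩

end Aux

/-- In a continuous module, a nonempty intersection of 1-step m-filters is 1-step. -/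
theorem oneStep_iInter_of_continuous {Q : Type u} {M : Type v}
    [IntegralQuantale Q] [QModule Q M] (hM : ContinuousLattice M)
    {ι : Type u} [Nonempty ι] (F : ι → Set Q) (hF : ∀ i, IsMFilter (F i))
    (h1 : ∀ i, OneStep M (F i)) :
    OneStep M (⋂ i, F i) := by
  intro a b hab
  classical
  have hstep : ∀ i, stepLE (F i) a b := fun i =>
    h1 i a b (localLE_mono (Set.iInter_subset F i) hab)
  obtain ⟨B, hBne, hBsup, hBapprox⟩ := hM a
  -- For each `b' ∈ B` and each `i`, find a scalar `t ∈ F i` with `t • b' ≤ b`.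
  have key : ∀ b' ∈ B, ∀ i : ι, ∃ t : Q, t ∈ F i ∧ t • b' ≤ b := by
    intro b' hb' i
    obtain ⟨P, hPne, hPF, haP, hPb⟩ := hstep i
    have hsup : a ≤ sSup (Prod.fst '' P) := by rwa [sSup_image]
    obtain ⟨T₀, hT₀ne, hT₀sub, hble⟩ :=
      hBapprox (Prod.fst '' P) (hPne.image _) hsup b' hb'
    have hchoose : ∀ x ∈ T₀, ∃ p ∈ P, p.1 = x := by
      intro x hx
      obtain ⟨p, hp, hpx⟩ := hT₀sub hx
      exact ⟨p, hp, hpx⟩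
    choose p hpP hpfst using hchoose
    set t : Q := ∏ x ∈ T₀.attach, (p x.1 x.2).2 with ht
    have htF : t ∈ F i := mfilter_prod (hF i) _ _ (fun x _ => hPF _ (hpP x.1 x.2))
    refine ⟨t, htF, ?_⟩
    have hb'le : b' ≤ sSup (↑T₀ : Set M) := by
      rwa [← Finset.sup_id_eq_sSup]
    have h2' : t • sSup (↑T₀ : Set M) = ⨆ x ∈ (↑T₀ : Set M), t • x :=
      QModule.smul_sSup' t _ (Finset.coe_nonempty.mpr hT₀ne)
    have h3' : ∀ x ∈ (↑T₀ : Set M), t • x ≤ b := by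
      intro x hx
      have hx' : x ∈ T₀ := hx
      have hle : t ≤ (p x hx').2 := by
        have := Finset.mul_prod_erase T₀.attach (fun y : {y // y ∈ T₀} => (p y.1 y.2).2)
          (Finset.mem_attach _ ⟨x, hx'⟩)
        calc t = (p x hx').2 * ∏ y ∈ T₀.attach.erase ⟨x, hx'⟩, (p y.1 y.2).2 := this.symm
          _ ≤ (p x hx').2 := iq_mul_le_left_s9 _ _
      calc t • x ≤ (p x hx').2 • x := qsmul_le_smul_right hle x
        _ = (p x hx').2 • (p x hx').1 := by rw [hpfst x hx']
        _ ≤ b := hPb _ (hpP x hx')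
    calc t • b' ≤ t • sSup (↑T₀ : Set M) := qsmul_le_smul_left t hb'le
      _ = ⨆ x ∈ (↑T₀ : Set M), t • x := h2'
      _ ≤ b := iSup₂_le h3'
  -- Combine the scalars over all `i` by taking the supremum.
  have key2 : ∀ b' ∈ B, ∃ s : Q, s ∈ (⋂ i, F i) ∧ s • b' ≤ b := by
    intro b' hb'
    choose t ht1 ht2 using key b' hb'
    refine ⟨⨆ i, t i, ?_, ?_⟩
    · exact Set.mem_iInter.mpr fun j => (hF j).2.1 (t j) (ht1 j) _ (le_iSup t j)
    · have h := QModule.sSup_smul' (Set.range t) b' (Set.range_nonempty t)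
      simp only [iSup_range] at h
      rw [h]
      exact iSup_le ht2
  have key2' : ∀ b' : M, ∃ s : Q, b' ∈ B → s ∈ (⋂ i, F i) ∧ s • b' ≤ b := by
    intro b'
    by_cases h : b' ∈ B
    · obtain ⟨s, hs⟩ := key2 b' h
      exact ⟨s, fun _ => hs⟩
    · exact ⟨⊤, fun h' => absurd h' h⟩
  choose σ hσ using key2'
  refine ⟨(fun m => (m, σ m)) '' B, hBne.image _, ?_, ?_, ?_⟩
  · rintro q ⟨m, hm, rfl⟩
    exact (hσ m hm).1
  · rw [← hBsup]
    apply sSup_le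
    intro m hm
    exact le_iSup₂_of_le ((m, σ m)) (Set.mem_image_of_mem _ hm) le_rfl
  · rintro q ⟨m, hm, rfl⟩
    exact (hσ m hm).2
end

section
/- Let X be a locally compact Hausdorff topological space and (C_k)_{k ∈ ℕ} closed subsets of X with ⋃_{k ∈ ℕ} C_k = X. Let Y be a nonempty topological space and f : Y → X a continuous map. Then there exists ℓ ∈ ℕ such that f⁻¹(C_ℓ) is not nowhere dense in Y, i.e., the closure of f⁻¹(C_ℓ) in Y has nonempty interior. -/
/-- Baire category theorem for maps: if a locally compact Hausdorff space `X` is the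
union of countably many closed sets `C k` and `f : Y → X` is continuous with `Y`
nonempty, then some preimage `f ⁻¹' (C ℓ)` is not nowhere dense in `Y`, i.e., its
closure has nonempty interior. -/
theorem baire_category_map {X Y : Type*} [TopologicalSpace X] [T2Space X]
    [WeaklyLocallyCompactSpace X] [TopologicalSpace Y] [Nonempty Y]
    (C : ℕ → Set X) (hC : ∀ k, IsClosed (C k)) (hUnion : (⋃ k, C k) = Set.univ)
    (f : Y → X) (hf : Continuous f) :
    ∃ ℓ : ℕ, (interior (closure (f ⁻¹' C ℓ))).Nonempty := by
  by_contra hcon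
  push_neg at hcon
  -- each preimage is closed with empty interior, so its complement is open dense
  have hclosed : ∀ k, IsClosed (f ⁻¹' C k) := fun k => (hC k).preimage hf
  have hdense : ∀ k, Dense ((f ⁻¹' C k)ᶜ) := by
    intro k
    rw [← interior_eq_empty_iff_dense_compl, ← (hclosed k).closure_eq]
    exact hcon k
  -- the step of the construction
  have step : ∀ (k : ℕ) (p : Y × Set X), (IsCompact p.2 ∧ f p.1 ∈ interior p.2) →
      ∃ q : Y × Set X, (IsCompact q.2 ∧ f q.1 ∈ interior q.2) ∧
        q.2 ⊆ interior p.2 ∧ q.2 ∩ C k = ∅ := by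
    intro k p hp
    -- find y' with f y' ∈ interior p.2 \ C k
    have hopen : IsOpen (f ⁻¹' (interior p.2)) := (isOpen_interior).preimage hf
    have hne : (f ⁻¹' (interior p.2)).Nonempty := ⟨p.1, hp.2⟩
    obtain ⟨y', hy'1, hy'2⟩ := (hdense k).inter_open_nonempty _ hopen hne
    have hU : IsOpen (interior p.2 \ C k) := isOpen_interior.sdiff (hC k)
    have hyU : f y' ∈ interior p.2 \ C k := ⟨hy'1, hy'2⟩
    obtain ⟨K, hKc, hKmem, hKsub⟩ := exists_compact_subset hU hyU
    exact ⟨(y', K), ⟨hKc, hKmem⟩,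
      fun x hx => (hKsub hx).1,
      Set.eq_empty_iff_forall_notMem.2 fun x hx => (hKsub hx.1).2 hx.2⟩
  -- base case
  obtain ⟨y0⟩ := (inferInstance : Nonempty Y)
  obtain ⟨K0, hK0c, hK0mem, _⟩ := exists_compact_subset isOpen_univ (Set.mem_univ (f y0))
  -- recursive construction
  let seq : ℕ → {p : Y × Set X // IsCompact p.2 ∧ f p.1 ∈ interior p.2} :=
    fun n => Nat.rec ⟨(y0, K0), hK0c, hK0mem⟩
      (fun k ih => ⟨(step k ih.1 ih.2).choose, (step k ih.1 ih.2).choose_spec.1⟩) n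
  have hseq : ∀ k, (seq (k + 1)).1.2 ⊆ interior (seq k).1.2 ∧ (seq (k + 1)).1.2 ∩ C k = ∅ :=
    fun k => (step k (seq k).1 (seq k).2).choose_spec.2
  set K : ℕ → Set X := fun n => (seq n).1.2 with hK
  have hKcomp : ∀ n, IsCompact (K n) := fun n => (seq n).2.1
  have hKne : ∀ n, (K n).Nonempty := fun n => ⟨f (seq n).1.1, interior_subset (seq n).2.2⟩
  have hKsub : ∀ n, K (n + 1) ⊆ K n := fun n => (hseq n).1.trans interior_subset
  have hKcl : ∀ n, IsClosed (K n) := fun n => (hKcomp n).isClosed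
  obtain ⟨x, hx⟩ := IsCompact.nonempty_iInter_of_sequence_nonempty_isCompact_isClosed
    K hKsub hKne (hKcomp 0) hKcl
  have hxC : x ∈ ⋃ k, C k := hUnion ▸ Set.mem_univ x
  obtain ⟨_, ⟨k, rfl⟩, hxk⟩ := hxC
  have : x ∈ K (k + 1) := Set.mem_iInter.1 hx (k + 1)
  exact Set.eq_empty_iff_forall_notMem.1 (hseq k).2 x ⟨this, hxk⟩
end
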